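/- arXiv:2508.01179 — 4 statements merged into one kernel-verified Lean document; each statement's English description precedes it below -/
import Mathlib

section
/- Let f, h ∈ L^p(ℝ^n) be nonzero, 0 < s < 1, p ≥ 1. Then there exists c > 0, depending only on f, h, p (and not on s), such that for every direction ξ ∈ S^{n−1}, ∫_0^∞ t^{−ps−1} ∫_{ℝ^n} |f(x + tξ) − h(x)|^p dx dt ≥ c^{ps}. Consequently, the generalized fractional L_p polar projection body Π_p^{*,s}(f,h), defined by the gauge ‖ξ‖^{ps} equal to this double integral, is contained in the ball cB^n. -/
open MeasureTheory Set
open scoped ENNReal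

/-- For nonzero `f, h ∈ L^p(ℝⁿ)` there is `c > 0`, depending only on `f, h, p` and not
on `s`, such that for every `0 < s < 1` and every unit vector `ξ`,
`∫_0^∞ t^(−ps−1) ∫ |f(x+tξ) − h(x)|^p dx dt ≥ c^(ps)`; that is, the generalized
fractional `L_p` polar projection body `Π_p^{*,s}(f,h)` is contained in `c B^n`. -/
theorem fractional_polar_projection_body_bounded (n : ℕ) (p : ℝ) (hp : 1 ≤ p)
    (f h : EuclideanSpace ℝ (Fin n) → ℝ) (hf : Measurable f) (hh : Measurable h)
    (hfLp : MemLp f (ENNReal.ofReal p)) (hhLp : MemLp h (ENNReal.ofReal p))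
    (hfne : 0 < volume {x | f x ≠ 0}) (hhne : 0 < volume {x | h x ≠ 0}) :
    ∃ c : ℝ, 0 < c ∧ ∀ s : ℝ, 0 < s → s < 1 →
      ∀ ξ : EuclideanSpace ℝ (Fin n), ‖ξ‖ = 1 →
        ENNReal.ofReal (c ^ (p * s)) ≤
          ∫⁻ t in Ioi (0 : ℝ), ENNReal.ofReal (t ^ (-(p * s) - 1)) *
            ∫⁻ x, ENNReal.ofReal (|f (x + t • ξ) - h x| ^ p) := by
  classical
  -- Step 1: find δ > 0 with positive measure level set of |h|
  obtain ⟨k, hk⟩ : ∃ k : ℕ, 0 < volume {x : EuclideanSpace ℝ (Fin n) | 1/(k+1:ℝ) ≤ |h x|} := by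
    by_contra hcon
    push_neg at hcon
    have h0 : volume {x : EuclideanSpace ℝ (Fin n) | h x ≠ 0} = 0 := by
      refine measure_mono_null ?_
        (measure_iUnion_null (s := fun k : ℕ => {x : EuclideanSpace ℝ (Fin n) | 1/(k+1:ℝ) ≤ |h x|})
          (fun k => le_antisymm (by simpa using hcon k) (zero_le)))
      intro x hx
      obtain ⟨k, hk⟩ := exists_nat_one_div_lt (abs_pos.mpr hx)
      exact mem_iUnion.2 ⟨k, le_of_lt hk⟩
    exact absurd h0 hhne.ne'
  set δ : ℝ := 1/(k+1:ℝ) with hδdef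
  have hδ : 0 < δ := by positivity
  set A : Set (EuclideanSpace ℝ (Fin n)) := {x | δ ≤ |h x|} with hAdef
  have hAmeas : MeasurableSet A := measurableSet_le measurable_const hh.abs
  -- Step 2: find a bounded piece K of A with positive measure
  obtain ⟨R₁, hR₁⟩ : ∃ R : ℕ, 0 < volume (A ∩ Metric.closedBall 0 (R:ℝ)) := by
    by_contra hcon
    push_neg at hcon
    have h0 : volume A = 0 := by
      refine measure_mono_null ?_
        (measure_iUnion_null (s := fun R : ℕ => A ∩ Metric.closedBall 0 (R:ℝ))
          (fun R => le_antisymm (by simpa using hcon R) (zero_le)))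
      intro x hx
      obtain ⟨R, hR⟩ := exists_nat_ge ‖x‖
      exact mem_iUnion.2 ⟨R, hx, by simpa [mem_closedBall_zero_iff] using hR⟩
    exact absurd h0 hk.ne'
  set K : Set (EuclideanSpace ℝ (Fin n)) := A ∩ Metric.closedBall 0 (R₁:ℝ) with hKdef
  have hKmeas : MeasurableSet K := hAmeas.inter Metric.isClosed_closedBall.measurableSet
  have hKpos : 0 < volume K := hR₁
  have hKfin : volume K < ∞ :=
    lt_of_le_of_lt (measure_mono inter_subset_right) measure_closedBall_lt_top
  -- Step 3: the level set of |f| has finite measure (Chebyshev)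
  set T : Set (EuclideanSpace ℝ (Fin n)) := {x | δ/2 ≤ |f x|} with hTdef
  have hTmeas : MeasurableSet T := measurableSet_le measurable_const hf.abs
  have hp0 : (0:ℝ) < p := by linarith
  have hTfin : volume T < ∞ := by
    have hq0 : (ENNReal.ofReal p) ≠ 0 := (ENNReal.ofReal_pos.2 hp0).ne'
    have hε0 : (ENNReal.ofReal (δ/2)) ≠ 0 := (ENNReal.ofReal_pos.2 (by positivity)).ne'
    have key := meas_ge_le_mul_pow_eLpNorm_enorm (μ := volume) hq0 ENNReal.ofReal_ne_top hfLp.1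
      (ε := ENNReal.ofReal (δ/2)) hε0 (fun h => absurd h ENNReal.ofReal_ne_top)
    refine lt_of_le_of_lt (le_trans (measure_mono ?_) key) ?_
    · intro x hx
      simp only [mem_setOf_eq] at hx ⊢
      rw [← ofReal_norm]
      exact ENNReal.ofReal_le_ofReal (by rwa [Real.norm_eq_abs])
    · exact ENNReal.mul_lt_top
        (ENNReal.rpow_lt_top_of_nonneg ENNReal.toReal_nonneg
          (ENNReal.inv_ne_top.2 hε0))
        (ENNReal.rpow_lt_top_of_nonneg ENNReal.toReal_nonneg hfLp.2.ne)
  -- Step 4: outside a big ball, T has small measure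
  have hhalfpos : 0 < volume K / 2 := ENNReal.div_pos hKpos.ne' ENNReal.ofNat_ne_top
  obtain ⟨R₂, hR₂⟩ : ∃ R : ℕ, volume (T \ Metric.closedBall 0 (R:ℝ)) < volume K / 2 := by
    have h1 : ⋂ R : ℕ, (T \ Metric.closedBall 0 (R:ℝ)) = ∅ := by
      ext x
      simp only [mem_iInter, mem_diff, mem_empty_iff_false, iff_false, not_forall]
      obtain ⟨R, hR⟩ := exists_nat_ge ‖x‖
      exact ⟨R, fun hx => hx.2 (by simpa [mem_closedBall_zero_iff] using hR)⟩
    have htend := tendsto_measure_iInter_atTop (μ := volume)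
      (s := fun R : ℕ => T \ Metric.closedBall 0 (R:ℝ))
      (fun R => (hTmeas.diff Metric.isClosed_closedBall.measurableSet).nullMeasurableSet)
      (fun i j hij => diff_subset_diff_right
        (Metric.closedBall_subset_closedBall (by exact_mod_cast hij)))
      ⟨0, (lt_of_le_of_lt (measure_mono diff_subset) hTfin).ne⟩
    rw [h1] at htend
    simp only [measure_empty] at htend
    exact (htend.eventually (gt_mem_nhds hhalfpos)).exists
  -- Step 5: constants
  set T0 : ℝ := (R₁:ℝ) + (R₂:ℝ) + 1 with hT0def
  have hT0 : 0 < T0 := by positivity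
  set M : ℝ≥0∞ := ENNReal.ofReal ((δ/2)^p) * (volume K / 2) with hMdef
  have hMpos : M ≠ 0 := by
    apply mul_ne_zero
    · exact (ENNReal.ofReal_pos.2 (Real.rpow_pos_of_pos (by positivity) p)).ne'
    · exact hhalfpos.ne'
  have hMfin : M ≠ ∞ :=
    ENNReal.mul_ne_top ENNReal.ofReal_ne_top (ENNReal.div_lt_top hKfin.ne two_ne_zero).ne
  -- Step 6: the inner integral is bounded below by M for t > T0
  have inner_bound : ∀ t : ℝ, T0 < t → ∀ ξ : EuclideanSpace ℝ (Fin n), ‖ξ‖ = 1 →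
      M ≤ ∫⁻ x, ENNReal.ofReal (|f (x + t • ξ) - h x| ^ p) := by
    intro t ht ξ hξ
    set g : EuclideanSpace ℝ (Fin n) → EuclideanSpace ℝ (Fin n) := fun x => x + t • ξ with hgdef
    have hgmeas : Measurable g := measurable_id.add_const _
    set S : Set (EuclideanSpace ℝ (Fin n)) := K \ g ⁻¹' T with hSdef
    have htpos : 0 < t := lt_trans hT0 ht
    have hsub : K ∩ g ⁻¹' T ⊆ g ⁻¹' (T \ Metric.closedBall 0 (R₂:ℝ)) := by
      rintro x ⟨hxK, hxT⟩
      refine ⟨hxT, ?_⟩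
      have hx1 : ‖x‖ ≤ (R₁:ℝ) := mem_closedBall_zero_iff.1 hxK.2
      have h2 : ‖(x + t • ξ) - x‖ ≤ ‖x + t • ξ‖ + ‖x‖ := norm_sub_le _ _
      have h3 : ‖(x + t • ξ) - x‖ = t := by
        simp [norm_smul, hξ, abs_of_pos htpos]
      rw [mem_closedBall_zero_iff]
      push_neg
      have : T0 < t := ht
      rw [hT0def] at this
      calc (R₂:ℝ) < t - (R₁:ℝ) := by linarith
        _ ≤ ‖x + t • ξ‖ := by rw [h3] at h2; linarith
    have hpre : volume (g ⁻¹' (T \ Metric.closedBall 0 (R₂:ℝ)))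
        = volume (T \ Metric.closedBall 0 (R₂:ℝ)) :=
      measure_preimage_add_right volume (t • ξ) _
    have hS : volume K / 2 ≤ volume S := by
      have hKsplit : volume K ≤ volume S + volume (K ∩ g ⁻¹' T) := by
        refine le_trans (measure_mono ?_) (measure_union_le _ _)
        intro x hx
        by_cases hxT : x ∈ g ⁻¹' T
        · exact Or.inr ⟨hx, hxT⟩
        · exact Or.inl ⟨hx, hxT⟩
      have hsmall : volume (K ∩ g ⁻¹' T) ≤ volume K / 2 :=
        le_trans (le_trans (measure_mono hsub) hpre.le) hR₂.le
      calc volume K / 2 = volume K - volume K / 2 := (ENNReal.sub_half hKfin.ne).symm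
        _ ≤ volume K - volume (K ∩ g ⁻¹' T) := tsub_le_tsub_left hsmall _
        _ ≤ volume S := by rw [tsub_le_iff_right]; exact hKsplit
    have hpt : ∀ x ∈ S, ENNReal.ofReal ((δ/2)^p)
        ≤ ENNReal.ofReal (|f (x + t • ξ) - h x| ^ p) := by
      rintro x ⟨hxK, hxT⟩
      have h1 : δ ≤ |h x| := hxK.1
      have h2 : |f (x + t • ξ)| < δ/2 := by
        have := hxT
        simp only [hSdef, hgdef, mem_preimage, hTdef, mem_setOf_eq, not_le] at this
        exact this
      have h3 : δ/2 ≤ |f (x + t • ξ) - h x| := by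
        have h4 := abs_sub_abs_le_abs_sub (h x) (f (x + t • ξ))
        rw [abs_sub_comm] at h4
        linarith
      exact ENNReal.ofReal_le_ofReal (Real.rpow_le_rpow (by positivity) h3 (le_of_lt hp0))
    calc M = ENNReal.ofReal ((δ/2)^p) * (volume K / 2) := rfl
      _ ≤ ENNReal.ofReal ((δ/2)^p) * volume S := mul_le_mul_right hS _
      _ = ∫⁻ _ in S, ENNReal.ofReal ((δ/2)^p) := (setLIntegral_const _ _).symm
      _ ≤ ∫⁻ x in S, ENNReal.ofReal (|f (x + t • ξ) - h x| ^ p) :=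
          setLIntegral_mono' (hKmeas.diff (hgmeas hTmeas)) hpt
      _ ≤ ∫⁻ x, ENNReal.ofReal (|f (x + t • ξ) - h x| ^ p) := setLIntegral_le_lintegral _ _
  -- Step 7: choose c and prove the estimate
  set m : ℝ := M.toReal with hmdef
  have hm : 0 < m := ENNReal.toReal_pos hMpos hMfin
  set L : ℝ := max (1/m) 1 with hLdef
  have hLpos : 0 < L := lt_of_lt_of_le one_pos (le_max_right _ _)
  refine ⟨Real.exp (-L) / T0, by positivity, ?_⟩
  intro s hs hs1 ξ hξ
  set a : ℝ := p * s with hadef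
  have hap : 0 < a := mul_pos hp0 hs
  -- key real inequality: c^a ≤ (m/a) * T0^(-a)
  have hkey : (Real.exp (-L) / T0) ^ a ≤ m / a * T0 ^ (-a) := by
    have e1 : (Real.exp (-L) / T0) ^ a = Real.exp (-L) ^ a * T0 ^ (-a) := by
      rw [Real.div_rpow (Real.exp_pos _).le hT0.le, Real.rpow_neg hT0.le, div_eq_mul_inv]
    have e2 : Real.exp (-L) ^ a = Real.exp (-(a*L)) := by
      rw [← Real.exp_mul]
      ring_nf
    have haL : 0 < a * L := mul_pos hap hLpos
    have h4 : a * L ≤ Real.exp (a * L) := by linarith [Real.add_one_le_exp (a*L)]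
    have h5 : Real.exp (-(a*L)) ≤ 1/(a*L) := by
      rw [Real.exp_neg, one_div]
      exact inv_anti₀ haL h4
    have h6 : 1/L ≤ m := by
      rw [div_le_iff₀ hLpos]
      calc (1:ℝ) = m * (1/m) := by field_simp
        _ ≤ m * L := by
            exact mul_le_mul_of_nonneg_left (le_max_left _ _) hm.le
    have e3 : a * Real.exp (-(a*L)) ≤ m := by
      calc a * Real.exp (-(a*L)) ≤ a * (1/(a*L)) :=
            mul_le_mul_of_nonneg_left h5 hap.le
        _ = 1/L := by field_simp
        _ ≤ m := h6
    have e4 : Real.exp (-(a*L)) ≤ m / a := by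
      rw [le_div_iff₀ hap]
      linarith [e3]
    calc (Real.exp (-L) / T0) ^ a = Real.exp (-(a*L)) * T0 ^ (-a) := by rw [e1, e2]
      _ ≤ m / a * T0 ^ (-a) :=
          mul_le_mul_of_nonneg_right e4 (Real.rpow_nonneg hT0.le _)
  -- outer integral computation
  have houter : ∫⁻ t in Ioi T0, ENNReal.ofReal (t ^ (-a - 1))
      = ENNReal.ofReal (T0 ^ (-a) / a) := by
    have hint : IntegrableOn (fun t : ℝ => t ^ (-a - 1)) (Ioi T0) :=
      integrableOn_Ioi_rpow_of_lt (by linarith) hT0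
    have hnn : 0 ≤ᵐ[volume.restrict (Ioi T0)] fun t : ℝ => t ^ (-a - 1) :=
      (ae_restrict_mem measurableSet_Ioi).mono fun t ht =>
        Real.rpow_nonneg (le_of_lt (lt_trans hT0 ht)) _
    rw [← ofReal_integral_eq_lintegral_ofReal hint hnn,
      integral_Ioi_rpow_of_lt (by linarith) hT0]
    rw [show (-a:ℝ) - 1 + 1 = -a from by ring, neg_div_neg_eq]
  calc ENNReal.ofReal ((Real.exp (-L) / T0) ^ (p * s))
      ≤ ENNReal.ofReal (m / a * T0 ^ (-a)) := ENNReal.ofReal_le_ofReal hkey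
    _ = ENNReal.ofReal m * ENNReal.ofReal (T0 ^ (-a) / a) := by
        rw [show m / a * T0 ^ (-a) = m * (T0 ^ (-a) / a) by ring,
          ENNReal.ofReal_mul hm.le]
    _ = M * ENNReal.ofReal (T0 ^ (-a) / a) := by rw [hmdef, ENNReal.ofReal_toReal hMfin]
    _ = M * ∫⁻ t in Ioi T0, ENNReal.ofReal (t ^ (-a - 1)) := by rw [houter]
    _ = ∫⁻ t in Ioi T0, M * ENNReal.ofReal (t ^ (-a - 1)) :=
        (lintegral_const_mul' M _ hMfin).symm
    _ ≤ ∫⁻ t in Ioi T0, ENNReal.ofReal (t ^ (-(p * s) - 1)) *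
          ∫⁻ x, ENNReal.ofReal (|f (x + t • ξ) - h x| ^ p) := by
        refine lintegral_mono_ae ((ae_restrict_mem measurableSet_Ioi).mono fun t ht => ?_)
        rw [mul_comm]
        exact mul_le_mul' (le_of_eq rfl) (inner_bound t ht ξ hξ) |>.trans
          (le_of_eq (by rw [mul_comm])) |>.trans (le_of_eq rfl)
    _ ≤ ∫⁻ t in Ioi (0:ℝ), ENNReal.ofReal (t ^ (-(p * s) - 1)) *
          ∫⁻ x, ENNReal.ofReal (|f (x + t • ξ) - h x| ^ p) :=
        lintegral_mono_set (Ioi_subset_Ioi hT0.le)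
end

section
/- Let 0 < s < 1, p ≥ 1, K ⊂ ℝ^n a star body, and f, h ∈ L^p(ℝ^n). Then ∫_{ℝ^n}∫_{ℝ^n} |f(x) − h(y)|^p / ‖x − y‖_K^{n+ps} dx dy = ∫_{S^{n−1}} ρ_K(ξ)^{n+ps} ∫_0^∞ t^{−ps−1} ∫_{ℝ^n} |f(y + tξ) − h(y)|^p dy dt dξ; i.e., the anisotropic fractional L_p Sobolev norm equals n times the dual mixed volume Ṽ_{−ps}(K, Π_p^{*,s}(f,h)). -/
open MeasureTheory Set Metric
open scoped Pointwise ENNReal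


lemma gauge_measurable_of_star {n : ℕ} (K : Set (EuclideanSpace ℝ (Fin n)))
    (hKcomp : IsCompact K) (hKgauge : ∀ x, x ∈ K ↔ gauge K x ≤ 1) :
    Measurable (gauge K) := by
  have key : ∀ r : ℝ, 0 < r → gauge K ⁻¹' Iic r = r • K := by
    intro r hr
    ext x
    simp only [mem_preimage, mem_Iic, mem_smul_set_iff_inv_smul_mem₀ hr.ne']
    rw [hKgauge, gauge_smul_of_nonneg (inv_nonneg.2 hr.le), smul_eq_mul,
      inv_mul_le_iff₀ hr, mul_one]
  have keym : ∀ r : ℝ, 0 < r → MeasurableSet (gauge K ⁻¹' Iic r) := by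
    intro r hr
    rw [key r hr]
    exact (hKcomp.smul r).measurableSet
  apply measurable_of_Iic
  intro r
  rcases lt_trichotomy r 0 with hr | rfl | hr
  · have : gauge K ⁻¹' Iic r = ∅ := by
      ext x
      simp only [mem_preimage, mem_Iic, mem_empty_iff_false, iff_false, not_le]
      exact hr.trans_le (gauge_nonneg x)
    rw [this]; exact MeasurableSet.empty
  · have : gauge K ⁻¹' Iic 0 = ⋂ k : ℕ, gauge K ⁻¹' Iic (1 / (k + 1 : ℝ)) := by
      ext x
      simp only [mem_preimage, mem_Iic, mem_iInter]
      constructor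
      · intro hx k
        exact hx.trans (by positivity)
      · intro hx
        by_contra hc
        push_neg at hc
        obtain ⟨k, hk⟩ := exists_nat_one_div_lt hc
        exact absurd (hx k) (not_le.2 hk)
    rw [this]
    exact MeasurableSet.iInter fun k => keym _ (by positivity)
  · exact keym r hr


theorem aux_main (n : ℕ) (hn : 0 < n) (p s : ℝ)
    (hp : 1 ≤ p) (hs0 : 0 < s) (hs1 : s < 1)
    (K : Set (EuclideanSpace ℝ (Fin n))) (hKcomp : IsCompact K)
    (hKgauge : ∀ x, x ∈ K ↔ gauge K x ≤ 1)
    (hKpos : ∀ z : EuclideanSpace ℝ (Fin n), z ≠ 0 → 0 < gauge K z)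
    (f h : EuclideanSpace ℝ (Fin n) → ℝ) (hf : Measurable f) (hh : Measurable h)
    (hGm : Measurable (gauge K)) :
    (∫⁻ x, ∫⁻ y, ENNReal.ofReal (|f x - h y| ^ p) *
        ENNReal.ofReal (gauge K (x - y) ^ (-((n : ℝ) + p * s)))) =
      ∫⁻ ξ : sphere (0 : EuclideanSpace ℝ (Fin n)) 1,
        (ENNReal.ofReal ((gauge K (ξ : EuclideanSpace ℝ (Fin n)))⁻¹ ^ ((n : ℝ) + p * s)) *
          ∫⁻ t in Ioi (0 : ℝ), ENNReal.ofReal (t ^ (-(p * s) - 1)) *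
            ∫⁻ y, ENNReal.ofReal (|f (y + t • (ξ : EuclideanSpace ℝ (Fin n))) - h y| ^ p))
        ∂(volume : Measure (EuclideanSpace ℝ (Fin n))).toSphere := by
  set c : ℝ := (n : ℝ) + p * s with hc
  have hps : 0 < p * s := mul_pos (lt_of_lt_of_le one_pos hp) hs0
  set I : EuclideanSpace ℝ (Fin n) → ℝ≥0∞ :=
    fun z => ∫⁻ y, ENNReal.ofReal (|f (y + z) - h y| ^ p) with hI
  have hIm : Measurable I := by
    apply Measurable.lintegral_prod_right'
      (f := fun q : EuclideanSpace ℝ (Fin n) × EuclideanSpace ℝ (Fin n) =>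
        ENNReal.ofReal (|f (q.2 + q.1) - h q.2| ^ p))
    fun_prop
  set G : EuclideanSpace ℝ (Fin n) → ℝ≥0∞ :=
    fun z => ENNReal.ofReal (gauge K z ^ (-c)) * I z with hG
  have hGmeas : Measurable G := by fun_prop
  -- Step A: LHS = ∫⁻ z, G z
  have stepA : (∫⁻ x, ∫⁻ y, ENNReal.ofReal (|f x - h y| ^ p) *
      ENNReal.ofReal (gauge K (x - y) ^ (-c))) = ∫⁻ z, G z := by
    have hFm : Measurable (fun q : EuclideanSpace ℝ (Fin n) × EuclideanSpace ℝ (Fin n) =>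
        ENNReal.ofReal (|f q.1 - h q.2| ^ p) *
        ENNReal.ofReal (gauge K (q.1 - q.2) ^ (-c))) := by fun_prop
    calc (∫⁻ x, ∫⁻ y, ENNReal.ofReal (|f x - h y| ^ p) *
          ENNReal.ofReal (gauge K (x - y) ^ (-c)))
        = ∫⁻ y, ∫⁻ x, ENNReal.ofReal (|f x - h y| ^ p) *
            ENNReal.ofReal (gauge K (x - y) ^ (-c)) :=
          lintegral_lintegral_swap hFm.aemeasurable
      _ = ∫⁻ y, ∫⁻ z, ENNReal.ofReal (|f (z + y) - h y| ^ p) *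
            ENNReal.ofReal (gauge K (z + y - y) ^ (-c)) := by
          refine lintegral_congr fun y => ?_
          exact (lintegral_add_right_eq_self (fun x => ENNReal.ofReal (|f x - h y| ^ p) *
            ENNReal.ofReal (gauge K (x - y) ^ (-c))) y).symm
      _ = ∫⁻ z, ∫⁻ y, ENNReal.ofReal (|f (z + y) - h y| ^ p) *
            ENNReal.ofReal (gauge K (z + y - y) ^ (-c)) := by
          refine lintegral_lintegral_swap ?_
          apply Measurable.aemeasurable
          fun_prop
      _ = ∫⁻ z, G z := by
          refine lintegral_congr fun z => ?_
          rw [hG]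
          simp only []
          rw [← lintegral_const_mul' _ _ ENNReal.ofReal_ne_top]
          refine lintegral_congr fun y => ?_
          rw [add_sub_cancel_right, add_comm z y, mul_comm]
  rw [stepA]
  -- Step B: polar coordinates
  haveI : Nontrivial (EuclideanSpace ℝ (Fin n)) := by
    apply Module.nontrivial_of_finrank_pos (R := ℝ)
    rw [finrank_euclideanSpace_fin]
    exact hn
  have hdim : Module.finrank ℝ (EuclideanSpace ℝ (Fin n)) = n := finrank_euclideanSpace_fin
  have stepB : (∫⁻ z, G z) = ∫⁻ ξ : sphere (0 : EuclideanSpace ℝ (Fin n)) 1,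
      ∫⁻ t in Ioi (0 : ℝ), ENNReal.ofReal (t ^ (n - 1 : ℕ)) *
        G (t • (ξ : EuclideanSpace ℝ (Fin n)))
      ∂(volume : Measure ℝ) ∂(volume : Measure (EuclideanSpace ℝ (Fin n))).toSphere := by
    have h1 : (∫⁻ z, G z) = ∫⁻ z : ({0}ᶜ : Set (EuclideanSpace ℝ (Fin n))), G z
        ∂((volume : Measure (EuclideanSpace ℝ (Fin n))).comap (↑)) := by
      rw [lintegral_subtype_comap (measurableSet_singleton (0 : EuclideanSpace ℝ (Fin n))).compl,
        restrict_compl_singleton]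
    have hGprodm : Measurable (fun q : sphere (0 : EuclideanSpace ℝ (Fin n)) 1 × Ioi (0 : ℝ) =>
        G (q.2.1 • (q.1.1 : EuclideanSpace ℝ (Fin n)))) := by
      apply hGmeas.comp
      exact ((continuous_subtype_val.comp continuous_snd).smul
        (continuous_subtype_val.comp continuous_fst)).measurable
    have h2 : (∫⁻ z : ({0}ᶜ : Set (EuclideanSpace ℝ (Fin n))), G z
        ∂((volume : Measure (EuclideanSpace ℝ (Fin n))).comap (↑))) =
        ∫⁻ q : sphere (0 : EuclideanSpace ℝ (Fin n)) 1 × Ioi (0 : ℝ),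
          G (q.2.1 • (q.1.1 : EuclideanSpace ℝ (Fin n)))
          ∂((volume : Measure (EuclideanSpace ℝ (Fin n))).toSphere.prod
            (.volumeIoiPow (Module.finrank ℝ (EuclideanSpace ℝ (Fin n)) - 1))) := by
      rw [← (volume : Measure (EuclideanSpace ℝ (Fin n))).measurePreserving_homeomorphUnitSphereProd.lintegral_comp_emb
        (Homeomorph.measurableEmbedding _)
        (fun q => G (q.2.1 • (q.1.1 : EuclideanSpace ℝ (Fin n))))]
      refine lintegral_congr fun x => ?_
      have hx : (x : EuclideanSpace ℝ (Fin n)) ≠ 0 := x.2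
      simp only [homeomorphUnitSphereProd_apply_fst_coe, homeomorphUnitSphereProd_apply_snd_coe]
      rw [smul_inv_smul₀ (norm_ne_zero_iff.2 hx)]
    rw [h1, h2, lintegral_prod _ hGprodm.aemeasurable]
    refine lintegral_congr fun ξ => ?_
    have hgmeas' : Measurable (fun t : Ioi (0:ℝ) =>
        G ((t : ℝ) • (ξ : EuclideanSpace ℝ (Fin n)))) :=
      hGmeas.comp ((continuous_subtype_val.smul continuous_const).measurable)
    rw [hdim, Measure.volumeIoiPow]
    rw [lintegral_withDensity_eq_lintegral_mul _
      ((measurable_subtype_coe.pow_const _).ennreal_ofReal) hgmeas']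
    simp only [Pi.mul_apply]
    rw [lintegral_subtype_comap measurableSet_Ioi
      (fun t : ℝ => ENNReal.ofReal (t ^ (n - 1 : ℕ)) *
        G (t • (ξ : EuclideanSpace ℝ (Fin n))))]
  rw [stepB]
  -- Step C: per-ξ rewriting
  refine lintegral_congr fun ξ => ?_
  have hξ : (ξ : EuclideanSpace ℝ (Fin n)) ≠ 0 := ne_of_mem_sphere ξ.2 one_ne_zero
  have hg : 0 < gauge K (ξ : EuclideanSpace ℝ (Fin n)) := hKpos _ hξ
  rw [← lintegral_const_mul' _ _ ENNReal.ofReal_ne_top]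
  refine setLIntegral_congr_fun measurableSet_Ioi ?_
  refine fun t ht => ?_
  have ht0 : (0 : ℝ) < t := ht
  have hgauge_smul : gauge K (t • (ξ : EuclideanSpace ℝ (Fin n))) =
      t * gauge K (ξ : EuclideanSpace ℝ (Fin n)) := by
    rw [gauge_smul_of_nonneg ht0.le, smul_eq_mul]
  have hpow : t ^ (n - 1 : ℕ) * (t * gauge K (ξ : EuclideanSpace ℝ (Fin n))) ^ (-c) =
      (gauge K (ξ : EuclideanSpace ℝ (Fin n)))⁻¹ ^ c * t ^ (-(p * s) - 1) := by
    rw [Real.mul_rpow ht0.le hg.le, ← Real.rpow_natCast t (n - 1), ← mul_assoc,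
      ← Real.rpow_add ht0 _ _, Real.rpow_neg hg.le, ← Real.inv_rpow hg.le]
    have he : ((n - 1 : ℕ) : ℝ) + -c = -(p * s) - 1 := by
      rw [Nat.cast_sub hn, Nat.cast_one, hc]
      ring
    rw [he, mul_comm]
  calc ENNReal.ofReal (t ^ (n - 1 : ℕ)) * G (t • (ξ : EuclideanSpace ℝ (Fin n)))
      = ENNReal.ofReal (t ^ (n - 1 : ℕ) *
          (t * gauge K (ξ : EuclideanSpace ℝ (Fin n))) ^ (-c)) *
          I (t • (ξ : EuclideanSpace ℝ (Fin n))) := by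
        rw [hG]
        simp only []
        rw [hgauge_smul, ← mul_assoc, ← ENNReal.ofReal_mul (by positivity)]
    _ = ENNReal.ofReal ((gauge K (ξ : EuclideanSpace ℝ (Fin n)))⁻¹ ^ c) *
          (ENNReal.ofReal (t ^ (-(p * s) - 1)) *
            I (t • (ξ : EuclideanSpace ℝ (Fin n)))) := by
        rw [hpow, ENNReal.ofReal_mul (by positivity), mul_assoc]
    _ = _ := by rw [hI]

/-- The anisotropic fractional `L_p` Sobolev norm equals `n` times the dual mixed volume
`Ṽ_{−ps}(K, Π_p^{*,s}(f,h))`: for a star body `K ⊂ ℝⁿ` and `f, h ∈ L^p(ℝⁿ)`,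
`∫∫ |f(x) − h(y)|^p / ‖x−y‖_K^(n+ps) dx dy
  = ∫_{S^(n−1)} ρ_K(ξ)^(n+ps) ∫_0^∞ t^(−ps−1) ∫ |f(y+tξ) − h(y)|^p dy dt dξ`,
where `ρ_K(ξ) = gauge K ξ⁻¹` and the sphere carries the measure `volume.toSphere`. -/
theorem anisotropic_sobolev_eq_dual_mixed_volume (n : ℕ) (hn : 0 < n) (p s : ℝ)
    (hp : 1 ≤ p) (hs0 : 0 < s) (hs1 : s < 1)
    (K : Set (EuclideanSpace ℝ (Fin n))) (hKcomp : IsCompact K)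
    (hKstar : ∀ x ∈ K, ∀ t : ℝ, 0 ≤ t → t ≤ 1 → t • x ∈ K)
    (hKgauge : ∀ x, x ∈ K ↔ gauge K x ≤ 1)
    (hKpos : ∀ z : EuclideanSpace ℝ (Fin n), z ≠ 0 → 0 < gauge K z)
    (f h : EuclideanSpace ℝ (Fin n) → ℝ) (hf : Measurable f) (hh : Measurable h)
    (hfLp : MemLp f (ENNReal.ofReal p)) (hhLp : MemLp h (ENNReal.ofReal p)) :
    (∫⁻ x, ∫⁻ y, ENNReal.ofReal (|f x - h y| ^ p) *
        ENNReal.ofReal (gauge K (x - y) ^ (-((n : ℝ) + p * s)))) =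
      ∫⁻ ξ : sphere (0 : EuclideanSpace ℝ (Fin n)) 1,
        (ENNReal.ofReal ((gauge K (ξ : EuclideanSpace ℝ (Fin n)))⁻¹ ^ ((n : ℝ) + p * s)) *
          ∫⁻ t in Ioi (0 : ℝ), ENNReal.ofReal (t ^ (-(p * s) - 1)) *
            ∫⁻ y, ENNReal.ofReal (|f (y + t • (ξ : EuclideanSpace ℝ (Fin n))) - h y| ^ p))
        ∂(volume : Measure (EuclideanSpace ℝ (Fin n))).toSphere := by
  exact aux_main n hn p s hp hs0 hs1 K hKcomp hKgauge hKpos f h hf hh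
    (gauge_measurable_of_star K hKcomp hKgauge)
end

section
/- Let K, L ⊂ ℝ^n be star bodies and q > 0. Then |K +̃_{−q} L|^{−q/n} ≥ |K|^{−q/n} + |L|^{−q/n}, where K +̃_{−q} L is the (−q)-radial sum defined by ρ(K +̃_{−q} L, ξ)^{−q} = ρ(K, ξ)^{−q} + ρ(L, ξ)^{−q} for ξ ∈ S^{n−1}. Equality holds if and only if K and L are dilates. -/
open MeasureTheory Set Metric
open scoped ENNReal Pointwise

private lemma strictConvexOn_rpow_neg {p : ℝ} (hp : p < 0) :
    StrictConvexOn ℝ (Ioi (0 : ℝ)) fun x : ℝ => x ^ p := by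
  refine strictConvexOn_of_deriv2_pos (convex_Ioi 0) ?_ ?_
  · intro x hx
    exact (Real.continuousAt_rpow_const x p (Or.inl (ne_of_gt hx))).continuousWithinAt
  · intro x hx
    rw [interior_Ioi] at hx
    have hx0 : (0 : ℝ) < x := hx
    have hiter : deriv^[2] (fun z : ℝ => z ^ p) x = deriv (deriv fun z : ℝ => z ^ p) x := rfl
    have h1 : deriv (fun z : ℝ => z ^ p) =ᶠ[nhds x] fun z => p * z ^ (p - 1) := by
      filter_upwards [isOpen_Ioi.mem_nhds hx0] with y hy
      exact (Real.hasDerivAt_rpow_const (Or.inl (ne_of_gt hy))).deriv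
    have h2 : HasDerivAt (fun z : ℝ => p * z ^ (p - 1)) (p * ((p - 1) * x ^ (p - 1 - 1))) x :=
      (Real.hasDerivAt_rpow_const (p := p - 1) (Or.inl (ne_of_gt hx0))).const_mul p
    rw [hiter, h1.deriv_eq, h2.deriv]
    have hxp : 0 < x ^ (p - 1 - 1) := Real.rpow_pos_of_pos hx0 _
    rw [← mul_assoc]
    exact mul_pos (mul_pos_of_neg_of_neg hp (by linarith)) hxp


private lemma sphere_nonempty_aux {n : ℕ} (hn : 0 < n) :
    Nonempty (sphere (0 : EuclideanSpace ℝ (Fin n)) 1) := by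
  refine ⟨⟨EuclideanSpace.single (⟨0, hn⟩ : Fin n) (1 : ℝ), ?_⟩⟩
  rw [mem_sphere_zero_iff_norm, EuclideanSpace.norm_single]
  norm_num

private lemma toSphere_open_pos {n : ℕ} (hn : 0 < n)
    {U : Set (sphere (0 : EuclideanSpace ℝ (Fin n)) 1)}
    (hU : IsOpen U) (hne : U.Nonempty) :
    0 < (volume : Measure (EuclideanSpace ℝ (Fin n))).toSphere U := by
  obtain ⟨ξ, hξU⟩ := hne
  rw [Measure.toSphere_apply' _ hU.measurableSet]
  obtain ⟨V, hV, hUV⟩ := isOpen_induced_iff.1 hU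
  set f : EuclideanSpace ℝ (Fin n) → EuclideanSpace ℝ (Fin n) := fun y => ‖y‖⁻¹ • y with hf
  set s : Set (EuclideanSpace ℝ (Fin n)) := {0}ᶜ ∩ ball 0 1 with hs
  have hsopen : IsOpen s := isClosed_singleton.isOpen_compl.inter isOpen_ball
  have hfc : ContinuousOn f s := by
    refine ContinuousOn.smul (f := fun y : EuclideanSpace ℝ (Fin n) => ‖y‖⁻¹) (g := id) ?_ continuousOn_id
    exact continuous_norm.continuousOn.inv₀ fun y hy =>
      norm_ne_zero_iff.2 (by simpa using hy.1)
  have hWopen : IsOpen (s ∩ f ⁻¹' V) := hfc.isOpen_inter_preimage hsopen hV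
  have hsub : s ∩ f ⁻¹' V ⊆ Ioo (0 : ℝ) 1 • (Subtype.val '' U) := by
    rintro y ⟨⟨hy0, hyb⟩, hyV⟩
    have hy0' : y ≠ 0 := by simpa using hy0
    have hny : 0 < ‖y‖ := norm_pos_iff.2 hy0'
    have hny1 : ‖y‖ < 1 := by simpa [mem_ball_zero_iff] using hyb
    have hfy : f y ∈ sphere (0 : EuclideanSpace ℝ (Fin n)) 1 := by
      rw [mem_sphere_zero_iff_norm, hf]
      simp [norm_smul, abs_of_nonneg (inv_nonneg.2 hny.le), inv_mul_cancel₀ hny.ne']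
    refine Set.mem_smul.2 ⟨‖y‖, ⟨hny, hny1⟩, f y, ?_, ?_⟩
    · refine ⟨⟨f y, hfy⟩, ?_, rfl⟩
      rw [← hUV]
      exact hyV
    · rw [hf]
      simp [smul_smul, mul_inv_cancel₀ hny.ne']
  have hWne : (s ∩ f ⁻¹' V).Nonempty := by
    set yv : EuclideanSpace ℝ (Fin n) := (2 : ℝ)⁻¹ • (ξ : EuclideanSpace ℝ (Fin n)) with hyv
    have hξn : ‖(ξ : EuclideanSpace ℝ (Fin n))‖ = 1 := mem_sphere_zero_iff_norm.1 ξ.2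
    have hyn : ‖yv‖ = (2 : ℝ)⁻¹ := by
      rw [hyv, norm_smul, hξn]
      norm_num
    have hyne : yv ≠ 0 := by
      intro h0
      rw [h0, norm_zero] at hyn
      norm_num at hyn
    have hfy : f yv = (ξ : EuclideanSpace ℝ (Fin n)) := by
      rw [hf]
      simp only
      rw [hyn, hyv, smul_smul]
      norm_num
    refine ⟨yv, ⟨⟨by simpa using hyne, ?_⟩, ?_⟩⟩
    · rw [mem_ball_zero_iff, hyn]; norm_num
    · show f yv ∈ V
      rw [hfy]
      rw [← hUV] at hξU
      exact hξU
  have hvolW : 0 < volume (s ∩ f ⁻¹' V) := hWopen.measure_pos volume hWne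
  have hdim : ((Module.finrank ℝ (EuclideanSpace ℝ (Fin n)) : ℕ) : ℝ≥0∞) ≠ 0 := by
    simp [finrank_euclideanSpace_fin, hn.ne']
  exact ENNReal.mul_pos hdim (ne_of_gt (lt_of_lt_of_le hvolW (measure_mono hsub)))

private lemma cont_integrable_sphere {n : ℕ}
    {g : sphere (0 : EuclideanSpace ℝ (Fin n)) 1 → ℝ} (hg : Continuous g) :
    Integrable g (volume : Measure (EuclideanSpace ℝ (Fin n))).toSphere :=
  integrableOn_univ.mp (hg.continuousOn.integrableOn_compact isCompact_univ)

private lemma integral_zero_iff_sphere {n : ℕ} (hn : 0 < n)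
    {g : sphere (0 : EuclideanSpace ℝ (Fin n)) 1 → ℝ} (hg : Continuous g)
    (hg0 : ∀ ξ, 0 ≤ g ξ) :
    (∫ ξ, g ξ ∂(volume : Measure (EuclideanSpace ℝ (Fin n))).toSphere) = 0 ↔ ∀ ξ, g ξ = 0 := by
  constructor
  · intro h ξ
    have hae := (integral_eq_zero_iff_of_nonneg hg0 (cont_integrable_sphere hg)).1 h
    by_contra hne
    have hpos : 0 < g ξ := lt_of_le_of_ne (hg0 ξ) (Ne.symm hne)
    have hUopen : IsOpen (g ⁻¹' Ioi 0) := isOpen_Ioi.preimage hg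
    have h1 : 0 < (volume : Measure (EuclideanSpace ℝ (Fin n))).toSphere (g ⁻¹' Ioi 0) :=
      toSphere_open_pos hn hUopen ⟨ξ, hpos⟩
    have h0 : (volume : Measure (EuclideanSpace ℝ (Fin n))).toSphere {x | g x ≠ 0} = 0 := by
      simpa [Filter.EventuallyEq, ae_iff] using hae
    have h2 : (volume : Measure (EuclideanSpace ℝ (Fin n))).toSphere (g ⁻¹' Ioi 0) = 0 :=
      measure_mono_null (fun x hx => ne_of_gt hx) h0
    rw [h2] at h1
    exact lt_irrefl _ h1
  · intro h
    simp [h]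

private lemma integral_pos_sphere {n : ℕ} (hn : 0 < n)
    {g : sphere (0 : EuclideanSpace ℝ (Fin n)) 1 → ℝ} (hg : Continuous g)
    (hgpos : ∀ ξ, 0 < g ξ) :
    0 < ∫ ξ, g ξ ∂(volume : Measure (EuclideanSpace ℝ (Fin n))).toSphere := by
  have hnn : 0 ≤ ∫ ξ, g ξ ∂(volume : Measure (EuclideanSpace ℝ (Fin n))).toSphere :=
    integral_nonneg fun ξ => (hgpos ξ).le
  rcases hnn.lt_or_eq with h | h
  · exact h
  · exfalso
    obtain ⟨ξ⟩ := sphere_nonempty_aux hn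
    exact absurd ((integral_zero_iff_sphere hn hg (fun ξ => (hgpos ξ).le)).1 h.symm ξ)
      (ne_of_gt (hgpos ξ))


private lemma rev_minkowski {n : ℕ} (hn : 0 < n) {p c : ℝ} (hp : p < 0) (hc : 0 < c)
    {u v : sphere (0 : EuclideanSpace ℝ (Fin n)) 1 → ℝ}
    (hu : Continuous u) (hv : Continuous v)
    (hupos : ∀ ξ, 0 < u ξ) (hvpos : ∀ ξ, 0 < v ξ) :
    ((c * ∫ ξ, (u ξ + v ξ) ^ p ∂(volume : Measure (EuclideanSpace ℝ (Fin n))).toSphere) ^ p⁻¹ ≥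
        (c * ∫ ξ, u ξ ^ p ∂(volume : Measure (EuclideanSpace ℝ (Fin n))).toSphere) ^ p⁻¹ +
          (c * ∫ ξ, v ξ ^ p ∂(volume : Measure (EuclideanSpace ℝ (Fin n))).toSphere) ^ p⁻¹) ∧
      (((c * ∫ ξ, (u ξ + v ξ) ^ p ∂(volume : Measure (EuclideanSpace ℝ (Fin n))).toSphere) ^ p⁻¹ =
          (c * ∫ ξ, u ξ ^ p ∂(volume : Measure (EuclideanSpace ℝ (Fin n))).toSphere) ^ p⁻¹ +
            (c * ∫ ξ, v ξ ^ p ∂(volume : Measure (EuclideanSpace ℝ (Fin n))).toSphere) ^ p⁻¹) ↔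
        ∃ c₀ : ℝ, 0 < c₀ ∧ ∀ ξ, u ξ = c₀ * v ξ) := by
  have hp0 : p ≠ 0 := ne_of_lt hp
  have hcont_up : Continuous fun ξ => u ξ ^ p := hu.rpow_const fun ξ => Or.inl (hupos ξ).ne'
  have hcont_vp : Continuous fun ξ => v ξ ^ p := hv.rpow_const fun ξ => Or.inl (hvpos ξ).ne'
  have hcont_sp : Continuous fun ξ => (u ξ + v ξ) ^ p :=
    (hu.add hv).rpow_const fun ξ => Or.inl (add_pos (hupos ξ) (hvpos ξ)).ne'
  set A := ∫ ξ, u ξ ^ p ∂(volume : Measure (EuclideanSpace ℝ (Fin n))).toSphere with hA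
  set B := ∫ ξ, v ξ ^ p ∂(volume : Measure (EuclideanSpace ℝ (Fin n))).toSphere with hB
  set I := ∫ ξ, (u ξ + v ξ) ^ p ∂(volume : Measure (EuclideanSpace ℝ (Fin n))).toSphere with hI
  have hApos : 0 < A := integral_pos_sphere hn hcont_up fun ξ => Real.rpow_pos_of_pos (hupos ξ) p
  have hBpos : 0 < B := integral_pos_sphere hn hcont_vp fun ξ => Real.rpow_pos_of_pos (hvpos ξ) p
  have hIpos : 0 < I := integral_pos_sphere hn hcont_sp fun ξ =>
    Real.rpow_pos_of_pos (add_pos (hupos ξ) (hvpos ξ)) p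
  set a := (c * A) ^ p⁻¹ with ha
  set b := (c * B) ^ p⁻¹ with hb
  have hapos : 0 < a := Real.rpow_pos_of_pos (mul_pos hc hApos) _
  have hbpos : 0 < b := Real.rpow_pos_of_pos (mul_pos hc hBpos) _
  have habpos : 0 < a + b := add_pos hapos hbpos
  have habp : 0 < (a + b) ^ p := Real.rpow_pos_of_pos habpos p
  have hap : a ^ p = c * A := Real.rpow_inv_rpow (mul_pos hc hApos).le hp0
  have hbp : b ^ p = c * B := Real.rpow_inv_rpow (mul_pos hc hBpos).le hp0
  set lam := a / (a + b) with hlam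
  set lam' := b / (a + b) with hlam'
  have hlam0 : 0 < lam := div_pos hapos habpos
  have hlam'0 : 0 < lam' := div_pos hbpos habpos
  have hsum : lam + lam' = 1 := by
    rw [hlam, hlam', ← add_div, div_self habpos.ne']
  set h : sphere (0 : EuclideanSpace ℝ (Fin n)) 1 → ℝ := fun ξ =>
    (a + b) ^ p * (lam * (u ξ / a) ^ p + lam' * (v ξ / b) ^ p) - (u ξ + v ξ) ^ p with hh
  have hbase : ∀ ξ, lam * (u ξ / a) + lam' * (v ξ / b) = (u ξ + v ξ) / (a + b) := by
    intro ξ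
    rw [hlam, hlam']
    field_simp
  have hsplit : ∀ ξ, (u ξ + v ξ) ^ p =
      (a + b) ^ p * ((u ξ + v ξ) / (a + b)) ^ p := by
    intro ξ
    rw [Real.div_rpow (add_pos (hupos ξ) (hvpos ξ)).le habpos.le, mul_comm,
      div_mul_cancel₀ _ habp.ne']
  have hmem1 : ∀ ξ, u ξ / a ∈ Ioi (0 : ℝ) := fun ξ => div_pos (hupos ξ) hapos
  have hmem2 : ∀ ξ, v ξ / b ∈ Ioi (0 : ℝ) := fun ξ => div_pos (hvpos ξ) hbpos
  have hkey : ∀ ξ, (u ξ + v ξ) ^ p ≤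
      (a + b) ^ p * (lam * (u ξ / a) ^ p + lam' * (v ξ / b) ^ p) := by
    intro ξ
    have hcx := (strictConvexOn_rpow_neg hp).convexOn.2 (hmem1 ξ) (hmem2 ξ) hlam0.le hlam'0.le hsum
    simp only [smul_eq_mul] at hcx
    rw [hbase ξ] at hcx
    rw [hsplit ξ]
    exact mul_le_mul_of_nonneg_left hcx habp.le
  have hhnn : ∀ ξ, 0 ≤ h ξ := fun ξ => sub_nonneg.2 (hkey ξ)
  have hcont_ua : Continuous fun ξ => (u ξ / a) ^ p :=
    (hu.div_const a).rpow_const fun ξ => Or.inl (hmem1 ξ).ne'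
  have hcont_vb : Continuous fun ξ => (v ξ / b) ^ p :=
    (hv.div_const b).rpow_const fun ξ => Or.inl (hmem2 ξ).ne'
  have hhcont : Continuous h :=
    (continuous_const.mul ((continuous_const.mul hcont_ua).add
      (continuous_const.mul hcont_vb))).sub hcont_sp
  have hint_ua : (∫ ξ, (u ξ / a) ^ p
      ∂(volume : Measure (EuclideanSpace ℝ (Fin n))).toSphere) = A / a ^ p := by
    rw [show (fun ξ => (u ξ / a) ^ p) = fun ξ => u ξ ^ p / a ^ p from
      funext fun ξ => Real.div_rpow (hupos ξ).le hapos.le p]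
    exact integral_div _ _
  have hint_vb : (∫ ξ, (v ξ / b) ^ p
      ∂(volume : Measure (EuclideanSpace ℝ (Fin n))).toSphere) = B / b ^ p := by
    rw [show (fun ξ => (v ξ / b) ^ p) = fun ξ => v ξ ^ p / b ^ p from
      funext fun ξ => Real.div_rpow (hvpos ξ).le hbpos.le p]
    exact integral_div _ _
  have hinth : (∫ ξ, h ξ ∂(volume : Measure (EuclideanSpace ℝ (Fin n))).toSphere) =
      ((a + b) ^ p - c * I) * c⁻¹ := by
    rw [hh]
    rw [integral_sub (cont_integrable_sphere (g := fun ξ => (a + b) ^ p * (lam * (u ξ / a) ^ p + lam' * (v ξ / b) ^ p)) ((continuous_const.mul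
      ((continuous_const.mul hcont_ua).add (continuous_const.mul hcont_vb)))))
      (cont_integrable_sphere hcont_sp)]
    rw [integral_const_mul, integral_add ((cont_integrable_sphere hcont_ua).const_mul lam)
      ((cont_integrable_sphere hcont_vb).const_mul lam'), integral_const_mul,
      integral_const_mul, hint_ua, hint_vb, hap, hbp, ← hI]
    have e1 : A / (c * A) = c⁻¹ := by
      rw [mul_comm, ← div_div, div_self hApos.ne', one_div]
    have e2 : B / (c * B) = c⁻¹ := by
      rw [mul_comm, ← div_div, div_self hBpos.ne', one_div]
    rw [e1, e2, ← add_mul, hsum, one_mul, sub_mul, mul_comm c I, mul_inv_cancel_right₀ hc.ne']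
  have hIle : c * I ≤ (a + b) ^ p := by
    have h0 : 0 ≤ ∫ ξ, h ξ ∂(volume : Measure (EuclideanSpace ℝ (Fin n))).toSphere :=
      integral_nonneg hhnn
    rw [hinth] at h0
    nlinarith [inv_pos.2 hc, mul_pos hc hIpos]
  have hiff1 : c * I = (a + b) ^ p ↔ ∀ ξ, h ξ = 0 := by
    rw [← integral_zero_iff_sphere hn hhcont hhnn, hinth, mul_eq_zero, sub_eq_zero]
    simp [inv_eq_zero, hc.ne', eq_comm]
  have hiff2 : (∀ ξ, h ξ = 0) ↔ ∀ ξ, u ξ / a = v ξ / b := by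
    constructor
    · intro hz ξ
      by_contra hne
      have hstrict := (strictConvexOn_rpow_neg hp).2 (hmem1 ξ) (hmem2 ξ) hne hlam0 hlam'0 hsum
      simp only [smul_eq_mul] at hstrict
      rw [hbase ξ] at hstrict
      have hlt : (u ξ + v ξ) ^ p <
          (a + b) ^ p * (lam * (u ξ / a) ^ p + lam' * (v ξ / b) ^ p) := by
        rw [hsplit ξ]
        exact (mul_lt_mul_iff_right₀ habp).2 hstrict
      have := hz ξ
      rw [hh] at this
      simp only at this
      linarith
    · intro heq ξ
      have hw := heq ξ
      have huv : u ξ + v ξ = (u ξ / a) * (a + b) := by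
        have h1 : u ξ = (u ξ / a) * a := by field_simp
        have h2 : v ξ = (v ξ / b) * b := by field_simp
        calc u ξ + v ξ = (u ξ / a) * a + (v ξ / b) * b := by rw [← h1, ← h2]
          _ = (u ξ / a) * a + (u ξ / a) * b := by rw [hw]
          _ = (u ξ / a) * (a + b) := by ring
      rw [hh]
      simp only
      rw [← hw, huv, Real.mul_rpow (div_pos (hupos ξ) hapos).le habpos.le, ← add_mul, hsum, one_mul]
      ring
  have hiff3 : (∀ ξ, u ξ / a = v ξ / b) ↔ ∃ c₀ : ℝ, 0 < c₀ ∧ ∀ ξ, u ξ = c₀ * v ξ := by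
    constructor
    · intro heq
      refine ⟨a / b, div_pos hapos hbpos, fun ξ => ?_⟩
      have hthis := heq ξ
      rw [div_eq_div_iff hapos.ne' hbpos.ne'] at hthis
      field_simp
      linear_combination hthis
    · rintro ⟨c₀, hc₀, hc₀eq⟩ ξ
      have hA' : A = c₀ ^ p * B := by
        rw [hA, hB, ← integral_const_mul]
        refine integral_congr_ae (Filter.Eventually.of_forall fun ξ => ?_)
        show u ξ ^ p = c₀ ^ p * v ξ ^ p
        rw [hc₀eq ξ, Real.mul_rpow hc₀.le (hvpos ξ).le]
      have ha' : a = c₀ * b := by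
        rw [ha, hb, hA', show c * (c₀ ^ p * B) = c₀ ^ p * (c * B) from by ring,
          Real.mul_rpow (Real.rpow_nonneg hc₀.le p) (mul_pos hc hBpos).le,
          Real.rpow_rpow_inv hc₀.le hp0]
      rw [hc₀eq ξ, ha', mul_div_mul_left _ _ hc₀.ne']
  have hmain : c * I ≤ (a + b) ^ p ∧ (c * I = (a + b) ^ p ↔ ∃ c₀ : ℝ, 0 < c₀ ∧ ∀ ξ, u ξ = c₀ * v ξ) :=
    ⟨hIle, hiff1.trans (hiff2.trans hiff3)⟩
  constructor
  · have h1 := Real.rpow_le_rpow_of_nonpos (mul_pos hc hIpos) hIle (inv_nonpos.2 hp.le)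
    rwa [Real.rpow_rpow_inv habpos.le hp0] at h1
  · constructor
    · intro he
      refine hmain.2.1 ?_
      have h2 := congrArg (fun x : ℝ => x ^ p) he
      rwa [Real.rpow_inv_rpow (mul_pos hc hIpos).le hp0] at h2
    · intro hex
      have h6 := hmain.2.2 hex
      rw [h6, Real.rpow_rpow_inv habpos.le hp0]


/-- Dual Brunn–Minkowski inequality for the `(−q)`-radial sum: for star bodies given by
positive continuous radial functions `ρK, ρL` on `S^(n−1)` (with surface measure
`volume.toSphere` and volume `|K| = (1/n)∫ ρK^n`), and `q > 0`,
`|K +̃₋q L|^(−q/n) ≥ |K|^(−q/n) + |L|^(−q/n)`, where the radial function of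
`K +̃₋q L` is `(ρK^(−q) + ρL^(−q))^(−1/q)`; equality holds iff `K` and `L` are
dilates, i.e. `ρK = c ρL` for some `c > 0`. -/
theorem dual_brunn_minkowski_neg_radial_sum (n : ℕ) (hn : 0 < n) (q : ℝ) (hq : 0 < q)
    (ρK ρL : sphere (0 : EuclideanSpace ℝ (Fin n)) 1 → ℝ)
    (hρK : Continuous ρK) (hρL : Continuous ρL)
    (hρKpos : ∀ ξ, 0 < ρK ξ) (hρLpos : ∀ ξ, 0 < ρL ξ) :
    (((n : ℝ)⁻¹ * ∫ ξ, ((ρK ξ ^ (-q) + ρL ξ ^ (-q)) ^ (-1 / q)) ^ (n : ℝ)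
          ∂(volume : Measure (EuclideanSpace ℝ (Fin n))).toSphere) ^ (-q / (n : ℝ)) ≥
        ((n : ℝ)⁻¹ * ∫ ξ, ρK ξ ^ (n : ℝ)
            ∂(volume : Measure (EuclideanSpace ℝ (Fin n))).toSphere) ^ (-q / (n : ℝ)) +
          ((n : ℝ)⁻¹ * ∫ ξ, ρL ξ ^ (n : ℝ)
            ∂(volume : Measure (EuclideanSpace ℝ (Fin n))).toSphere) ^ (-q / (n : ℝ))) ∧
      ((((n : ℝ)⁻¹ * ∫ ξ, ((ρK ξ ^ (-q) + ρL ξ ^ (-q)) ^ (-1 / q)) ^ (n : ℝ)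
            ∂(volume : Measure (EuclideanSpace ℝ (Fin n))).toSphere) ^ (-q / (n : ℝ)) =
          ((n : ℝ)⁻¹ * ∫ ξ, ρK ξ ^ (n : ℝ)
              ∂(volume : Measure (EuclideanSpace ℝ (Fin n))).toSphere) ^ (-q / (n : ℝ)) +
            ((n : ℝ)⁻¹ * ∫ ξ, ρL ξ ^ (n : ℝ)
              ∂(volume : Measure (EuclideanSpace ℝ (Fin n))).toSphere) ^ (-q / (n : ℝ))) ↔
        ∃ c : ℝ, 0 < c ∧ ∀ ξ, ρK ξ = c * ρL ξ) := by
  have hq0 : q ≠ 0 := ne_of_gt hq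
  have hnpos : (0 : ℝ) < n := Nat.cast_pos.2 hn
  have hn0 : (n : ℝ) ≠ 0 := ne_of_gt hnpos
  set p : ℝ := -(n : ℝ) / q with hpdef
  have hp : p < 0 := div_neg_of_neg_of_pos (neg_neg_of_pos hnpos) hq
  have hp0 : p ≠ 0 := ne_of_lt hp
  have hexp : -q / (n : ℝ) = p⁻¹ := by
    rw [hpdef, inv_div, div_neg, neg_div]
  have hcpos : (0 : ℝ) < (n : ℝ)⁻¹ := inv_pos.2 hnpos
  have hu : Continuous fun ξ => ρK ξ ^ (-q) := hρK.rpow_const fun ξ => Or.inl (hρKpos ξ).ne'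
  have hv : Continuous fun ξ => ρL ξ ^ (-q) := hρL.rpow_const fun ξ => Or.inl (hρLpos ξ).ne'
  have hupos : ∀ ξ, 0 < ρK ξ ^ (-q) := fun ξ => Real.rpow_pos_of_pos (hρKpos ξ) _
  have hvpos : ∀ ξ, 0 < ρL ξ ^ (-q) := fun ξ => Real.rpow_pos_of_pos (hρLpos ξ) _
  have hIsum : (∫ ξ, ((ρK ξ ^ (-q) + ρL ξ ^ (-q)) ^ (-1 / q)) ^ (n : ℝ)
        ∂(volume : Measure (EuclideanSpace ℝ (Fin n))).toSphere) =
      ∫ ξ, (ρK ξ ^ (-q) + ρL ξ ^ (-q)) ^ p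
        ∂(volume : Measure (EuclideanSpace ℝ (Fin n))).toSphere := by
    refine integral_congr_ae (Filter.Eventually.of_forall fun ξ => ?_)
    show ((ρK ξ ^ (-q) + ρL ξ ^ (-q)) ^ (-1 / q)) ^ (n : ℝ) = (ρK ξ ^ (-q) + ρL ξ ^ (-q)) ^ p
    rw [← Real.rpow_mul (add_pos (hupos ξ) (hvpos ξ)).le]
    congr 1
    rw [hpdef]
    ring
  have hIK : (∫ ξ, ρK ξ ^ (n : ℝ) ∂(volume : Measure (EuclideanSpace ℝ (Fin n))).toSphere) =
      ∫ ξ, (ρK ξ ^ (-q)) ^ p ∂(volume : Measure (EuclideanSpace ℝ (Fin n))).toSphere := by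
    refine integral_congr_ae (Filter.Eventually.of_forall fun ξ => ?_)
    show ρK ξ ^ (n : ℝ) = (ρK ξ ^ (-q)) ^ p
    rw [← Real.rpow_mul (hρKpos ξ).le]
    congr 1
    rw [hpdef]
    field_simp
  have hIL : (∫ ξ, ρL ξ ^ (n : ℝ) ∂(volume : Measure (EuclideanSpace ℝ (Fin n))).toSphere) =
      ∫ ξ, (ρL ξ ^ (-q)) ^ p ∂(volume : Measure (EuclideanSpace ℝ (Fin n))).toSphere := by
    refine integral_congr_ae (Filter.Eventually.of_forall fun ξ => ?_)
    show ρL ξ ^ (n : ℝ) = (ρL ξ ^ (-q)) ^ p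
    rw [← Real.rpow_mul (hρLpos ξ).le]
    congr 1
    rw [hpdef]
    field_simp
  obtain ⟨hineq, hiff⟩ := rev_minkowski hn hp hcpos hu hv hupos hvpos
  rw [hexp, hIsum, hIK, hIL]
  refine ⟨hineq, hiff.trans ?_⟩
  have hnegq0 : -q ≠ 0 := neg_ne_zero.2 hq0
  constructor
  · rintro ⟨c₀, hc₀, hc₀eq⟩
    refine ⟨c₀ ^ (-q)⁻¹, Real.rpow_pos_of_pos hc₀ _, fun ξ => ?_⟩
    have h2 := congrArg (fun x : ℝ => x ^ (-q)⁻¹) (hc₀eq ξ)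
    rwa [Real.rpow_rpow_inv (hρKpos ξ).le hnegq0,
      Real.mul_rpow hc₀.le (Real.rpow_nonneg (hρLpos ξ).le _),
      Real.rpow_rpow_inv (hρLpos ξ).le hnegq0] at h2
  · rintro ⟨c₀, hc₀, hc₀eq⟩
    refine ⟨c₀ ^ (-q), Real.rpow_pos_of_pos hc₀ _, fun ξ => ?_⟩
    show ρK ξ ^ (-q) = c₀ ^ (-q) * ρL ξ ^ (-q)
    rw [hc₀eq ξ, Real.mul_rpow hc₀.le (hρLpos ξ).le]
end

section
/- Let K, L ⊂ ℝ^n be star bodies and α < 0. Then the dual mixed volume satisfies Ṽ_α(K, L) ≥ |K|^{(n−α)/n} |L|^{α/n}, with equality if and only if ρ_K = c ρ_L almost everywhere on S^{n−1} for some c > 0. -/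
open MeasureTheory Set Metric
open scoped ENNReal
open scoped NNReal

lemma toSphere_isOpenPosMeasure {E : Type*} [NormedAddCommGroup E] [NormedSpace ℝ E]
    [MeasurableSpace E] [BorelSpace E] [FiniteDimensional ℝ E] [Nontrivial E]
    (μ : Measure E) [μ.IsAddHaarMeasure] : μ.toSphere.IsOpenPosMeasure := by
  constructor
  intro U hU hne
  rw [μ.toSphere_apply' hU.measurableSet]
  refine mul_ne_zero (by simp [Module.finrank_pos.ne']) ?_
  rw [← Measure.toSphere_apply_aux μ U ⟨1, mem_Ioi.2 one_pos⟩]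
  have hW : IsOpen ((homeomorphUnitSphereProd E) ⁻¹' (U ×ˢ Iio (⟨1, mem_Ioi.2 one_pos⟩ : Ioi (0:ℝ)))) := by
    have h2 : IsOpen (Iio (⟨1, mem_Ioi.2 one_pos⟩ : Ioi (0:ℝ))) := by
      have : (Iio (⟨1, mem_Ioi.2 one_pos⟩ : Ioi (0:ℝ))) = Subtype.val ⁻¹' Iio (1:ℝ) := rfl
      rw [this]
      exact continuous_subtype_val.isOpen_preimage _ isOpen_Iio
    exact (hU.prod h2).preimage (Homeomorph.continuous _)
  have hT : IsOpen ((↑) '' ((homeomorphUnitSphereProd E) ⁻¹' (U ×ˢ Iio (⟨1, mem_Ioi.2 one_pos⟩ : Ioi (0:ℝ)))) : Set E) :=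
    (isOpen_compl_singleton).isOpenMap_subtype_val _ hW
  obtain ⟨ξ, hξ⟩ := hne
  have hmem : (homeomorphUnitSphereProd E).symm (ξ, ⟨(1:ℝ)/2, by norm_num⟩) ∈
      (homeomorphUnitSphereProd E) ⁻¹' (U ×ˢ Iio (⟨1, mem_Ioi.2 one_pos⟩ : Ioi (0:ℝ))) := by
    simp only [mem_preimage, Homeomorph.apply_symm_apply]
    refine ⟨hξ, ?_⟩; rw [mem_Iio, Subtype.mk_lt_mk]; norm_num
  exact (hT.measure_ne_zero μ ⟨_, mem_image_of_mem _ hmem⟩)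

lemma dmv_pt1 {a b : ℝ} (ha : 0 < a) (hb : 0 < b) (n : ℝ) :
    b ^ n * (a / b) ^ n = a ^ n := by
  rw [Real.div_rpow ha.le hb.le, mul_comm, div_mul_cancel₀]
  exact (Real.rpow_pos_of_pos hb n).ne'

lemma dmv_pt2 {a b n α : ℝ} (ha : 0 < a) (hb : 0 < b) (hn : n ≠ 0) :
    b ^ n * ((a / b) ^ n) ^ ((n - α) / n) = a ^ (n - α) * b ^ α := by
  have hab : (0:ℝ) ≤ a / b := div_nonneg ha.le hb.le
  have h1 : n * ((n - α) / n) = n - α := by field_simp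
  rw [← Real.rpow_mul hab, h1, Real.div_rpow ha.le hb.le, mul_comm, div_mul_eq_mul_div,
    mul_div_assoc, ← Real.rpow_sub hb, sub_sub_cancel]


/-- Dual mixed volume inequality: for star bodies with positive continuous radial
functions `ρK, ρL` on `S^(n−1)` (surface measure `volume.toSphere`) and `α < 0`,
`Ṽ_α(K,L) = (1/n)∫ ρK^(n−α) ρL^α ≥ |K|^((n−α)/n) |L|^(α/n)`, with equality iff
`ρK = c ρL` for some `c > 0`. -/
theorem dual_mixed_volume_inequality (n : ℕ) (hn : 0 < n) (α : ℝ) (hα : α < 0)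
    (ρK ρL : sphere (0 : EuclideanSpace ℝ (Fin n)) 1 → ℝ)
    (hρK : Continuous ρK) (hρL : Continuous ρL)
    (hρKpos : ∀ ξ, 0 < ρK ξ) (hρLpos : ∀ ξ, 0 < ρL ξ) :
    (((n : ℝ)⁻¹ * ∫ ξ, ρK ξ ^ ((n : ℝ) - α) * ρL ξ ^ α
          ∂(volume : Measure (EuclideanSpace ℝ (Fin n))).toSphere) ≥
        ((n : ℝ)⁻¹ * ∫ ξ, ρK ξ ^ (n : ℝ)
            ∂(volume : Measure (EuclideanSpace ℝ (Fin n))).toSphere) ^ (((n : ℝ) - α) / (n : ℝ)) *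
          ((n : ℝ)⁻¹ * ∫ ξ, ρL ξ ^ (n : ℝ)
            ∂(volume : Measure (EuclideanSpace ℝ (Fin n))).toSphere) ^ (α / (n : ℝ))) ∧
      ((((n : ℝ)⁻¹ * ∫ ξ, ρK ξ ^ ((n : ℝ) - α) * ρL ξ ^ α
            ∂(volume : Measure (EuclideanSpace ℝ (Fin n))).toSphere) =
          ((n : ℝ)⁻¹ * ∫ ξ, ρK ξ ^ (n : ℝ)
              ∂(volume : Measure (EuclideanSpace ℝ (Fin n))).toSphere) ^ (((n : ℝ) - α) / (n : ℝ)) *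
            ((n : ℝ)⁻¹ * ∫ ξ, ρL ξ ^ (n : ℝ)
              ∂(volume : Measure (EuclideanSpace ℝ (Fin n))).toSphere) ^ (α / (n : ℝ))) ↔
        ∃ c : ℝ, 0 < c ∧ ∀ ξ, ρK ξ = c * ρL ξ) := by
  have hn' : (0:ℝ) < n := Nat.cast_pos.2 hn
  haveI : Nonempty (Fin n) := ⟨⟨0, hn⟩⟩
  haveI : Nontrivial (EuclideanSpace ℝ (Fin n)) := inferInstance
  set σ : Measure (sphere (0 : EuclideanSpace ℝ (Fin n)) 1) :=
    (volume : Measure (EuclideanSpace ℝ (Fin n))).toSphere with hσdef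
  haveI : σ.IsOpenPosMeasure := toSphere_isOpenPosMeasure _
  set p : ℝ := ((n : ℝ) - α) / (n : ℝ) with hpdef
  have hp : 1 < p := by rw [hpdef, lt_div_iff₀ hn']; linarith
  -- basic integrability
  have integ : ∀ (μ : Measure (sphere (0 : EuclideanSpace ℝ (Fin n)) 1)) [IsFiniteMeasure μ]
      {g : sphere (0 : EuclideanSpace ℝ (Fin n)) 1 → ℝ}, Continuous g → Integrable g μ := by
    intro μ _ g hg
    exact hg.integrable_of_hasCompactSupport (HasCompactSupport.of_compactSpace g)
  have hKc : Continuous fun ξ => ρK ξ ^ (n:ℝ) :=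
    hρK.rpow_const fun ξ => Or.inl (hρKpos ξ).ne'
  have hLc : Continuous fun ξ => ρL ξ ^ (n:ℝ) :=
    hρL.rpow_const fun ξ => Or.inl (hρLpos ξ).ne'
  have hAc : Continuous fun ξ => ρK ξ ^ ((n:ℝ) - α) * ρL ξ ^ α :=
    (hρK.rpow_const fun ξ => Or.inl (hρKpos ξ).ne').mul
      (hρL.rpow_const fun ξ => Or.inl (hρLpos ξ).ne')
  set A : ℝ := ∫ ξ, ρK ξ ^ ((n:ℝ) - α) * ρL ξ ^ α ∂σ with hAdef
  set C : ℝ := ∫ ξ, ρK ξ ^ (n:ℝ) ∂σ with hCdef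
  set B : ℝ := ∫ ξ, ρL ξ ^ (n:ℝ) ∂σ with hBdef
  -- σ is nonzero
  have hσuniv : σ univ ≠ 0 := by
    rw [hσdef, Measure.toSphere_apply_univ]
    exact mul_ne_zero (by simp [hn.ne']) (measure_ball_pos _ _ one_pos).ne'
  haveI : NeZero σ := ⟨fun h => hσuniv (by simp [h])⟩
  -- positivity of integrals
  have intpos : ∀ {g : sphere (0 : EuclideanSpace ℝ (Fin n)) 1 → ℝ}, Continuous g →
      (∀ ξ, 0 < g ξ) → 0 < ∫ ξ, g ξ ∂σ := by
    intro g hg hgpos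
    rw [integral_pos_iff_support_of_nonneg_ae
      (Filter.Eventually.of_forall fun ξ => (hgpos ξ).le) (integ σ hg)]
    have hsupp : Function.support g = univ := eq_univ_of_forall fun ξ => (hgpos ξ).ne'
    rw [hsupp]
    exact Measure.measure_univ_pos.2 (NeZero.ne σ)
  have hB : 0 < B := intpos hLc fun ξ => Real.rpow_pos_of_pos (hρLpos ξ) _
  have hC : 0 < C := intpos hKc fun ξ => Real.rpow_pos_of_pos (hρKpos ξ) _
  -- the weighted measure
  set w : sphere (0 : EuclideanSpace ℝ (Fin n)) 1 → ℝ≥0 :=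
    fun ξ => (ρL ξ ^ (n:ℝ)).toNNReal with hwdef
  have hwc : Continuous w := continuous_real_toNNReal.comp hLc
  have hwm : Measurable w := hwc.measurable
  set ν : Measure (sphere (0 : EuclideanSpace ℝ (Fin n)) 1) :=
    σ.withDensity (fun ξ => (w ξ : ℝ≥0∞)) with hνdef
  have hνuniv : ν univ = ENNReal.ofReal B := by
    rw [hνdef, withDensity_apply _ MeasurableSet.univ, setLIntegral_univ]
    have hcoe : ∀ ξ, ((w ξ : ℝ≥0) : ℝ≥0∞) = ENNReal.ofReal (ρL ξ ^ (n:ℝ)) := fun ξ => rfl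
    simp_rw [hcoe]
    rw [← ofReal_integral_eq_lintegral_ofReal (integ σ hLc)
      (Filter.Eventually.of_forall fun ξ => Real.rpow_nonneg (hρLpos ξ).le _)]
  haveI : IsFiniteMeasure ν := ⟨by rw [hνuniv]; exact ENNReal.ofReal_lt_top⟩
  haveI : NeZero ν := ⟨by
    intro h
    rw [h] at hνuniv
    exact absurd hνuniv.symm (by simp [ENNReal.ofReal_eq_zero, not_le, hB])⟩
  have hνtoReal : (ν univ).toReal = B := by rw [hνuniv, ENNReal.toReal_ofReal hB.le]
  -- integral with respect to ν
  have hint : ∀ g : sphere (0 : EuclideanSpace ℝ (Fin n)) 1 → ℝ,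
      ∫ ξ, g ξ ∂ν = ∫ ξ, ρL ξ ^ (n:ℝ) * g ξ ∂σ := by
    intro g
    rw [hνdef, integral_withDensity_eq_integral_smul hwm]
    refine integral_congr_ae (Filter.Eventually.of_forall fun ξ => ?_)
    simp only [hwdef, NNReal.smul_def, Real.coe_toNNReal _ (Real.rpow_nonneg (hρLpos ξ).le _),
      smul_eq_mul]
  -- the function for Jensen
  set f : sphere (0 : EuclideanSpace ℝ (Fin n)) 1 → ℝ :=
    fun ξ => (ρK ξ / ρL ξ) ^ (n:ℝ) with hfdef
  have hfpos : ∀ ξ, 0 < f ξ := fun ξ =>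
    Real.rpow_pos_of_pos (div_pos (hρKpos ξ) (hρLpos ξ)) _
  have hfc : Continuous f :=
    (hρK.div hρL fun ξ => (hρLpos ξ).ne').rpow_const fun ξ =>
      Or.inl (div_pos (hρKpos ξ) (hρLpos ξ)).ne'
  have hfpc : Continuous fun ξ => f ξ ^ p := hfc.rpow_const fun ξ => Or.inl (hfpos ξ).ne'
  have hfν : ∫ ξ, f ξ ∂ν = C := by
    rw [hint, hCdef]
    exact integral_congr_ae (Filter.Eventually.of_forall fun ξ =>
      dmv_pt1 (hρKpos ξ) (hρLpos ξ) _)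
  have hgν : ∫ ξ, f ξ ^ p ∂ν = A := by
    rw [hint, hAdef]
    exact integral_congr_ae (Filter.Eventually.of_forall fun ξ =>
      dmv_pt2 (hρKpos ξ) (hρLpos ξ) hn'.ne')
  have havg1 : ⨍ ξ, f ξ ∂ν = C / B := by
    rw [average_eq, measureReal_def, hνtoReal, hfν, smul_eq_mul, inv_mul_eq_div]
  have havg2 : ⨍ ξ, f ξ ^ p ∂ν = A / B := by
    rw [average_eq, measureReal_def, hνtoReal, hgν, smul_eq_mul, inv_mul_eq_div]
  -- Jensen
  have hconv : StrictConvexOn ℝ (Ici 0) fun x : ℝ => x ^ p := strictConvexOn_rpow hp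
  have hcont : ContinuousOn (fun x : ℝ => x ^ p) (Ici 0) := fun x _ =>
    (Real.continuousAt_rpow_const x p (Or.inr (by linarith))).continuousWithinAt
  have hfs : ∀ᵐ ξ ∂ν, f ξ ∈ Ici (0:ℝ) :=
    Filter.Eventually.of_forall fun ξ => (hfpos ξ).le
  have hfi : Integrable f ν := integ ν hfc
  have hgi : Integrable ((fun x : ℝ => x ^ p) ∘ f) ν := integ ν hfpc
  have hJle : (C / B) ^ p ≤ A / B := by
    have := hconv.convexOn.map_average_le hcont isClosed_Ici hfs hfi hgi
    rwa [havg1, havg2] at this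
  -- algebraic identity for the RHS
  have hninv : (0:ℝ) < (n:ℝ)⁻¹ := inv_pos.2 hn'
  have hq : α / (n:ℝ) = 1 - p := by rw [hpdef]; field_simp; ring
  have hRHS : ((n:ℝ)⁻¹ * C) ^ p * ((n:ℝ)⁻¹ * B) ^ (α / (n:ℝ)) =
      (n:ℝ)⁻¹ * ((C / B) ^ p * B) := by
    rw [hq, Real.mul_rpow hninv.le hC.le, Real.mul_rpow hninv.le hB.le,
      mul_mul_mul_comm, ← Real.rpow_add hninv, add_sub_cancel, Real.rpow_one,
      Real.div_rpow hC.le hB.le, Real.rpow_sub hB, Real.rpow_one]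
    ring
  constructor
  · -- inequality
    rw [ge_iff_le, hRHS]
    have hkey : (C / B) ^ p * B ≤ A := (le_div_iff₀ hB).1 hJle
    exact mul_le_mul_of_nonneg_left hkey hninv.le
  · constructor
    · -- equality implies proportional
      intro heq
      rw [hRHS] at heq
      have h3 : (C / B) ^ p * B = A := (mul_left_cancel₀ hninv.ne' heq.symm)
      have h4 : (C / B) ^ p = A / B := by rw [eq_div_iff hB.ne']; exact h3
      rcases hconv.ae_eq_const_or_map_average_lt hcont isClosed_Ici hfs hfi hgi with hconst | hlt
      · rw [havg1] at hconst
        have hae : f =ᵐ[σ] fun _ => C / B := by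
          have h5 := (ae_withDensity_iff hwm.coe_nnreal_ennreal).1 hconst
          refine h5.mono fun ξ hξ => hξ ?_
          simp only [hwdef, ne_eq, ENNReal.coe_eq_zero, Real.toNNReal_eq_zero, not_le]
          exact Real.rpow_pos_of_pos (hρLpos ξ) _
        have hfeq : f = fun _ => C / B := (hfc.ae_eq_iff_eq σ continuous_const).1 hae
        refine ⟨(C / B) ^ ((n:ℝ)⁻¹), Real.rpow_pos_of_pos (div_pos hC hB) _, fun ξ => ?_⟩
        have h5 : (ρK ξ / ρL ξ) ^ (n:ℝ) = C / B := congrFun hfeq ξ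
        have h6 : ρK ξ / ρL ξ = (C / B) ^ ((n:ℝ)⁻¹) := by
          calc ρK ξ / ρL ξ = ((ρK ξ / ρL ξ) ^ (n:ℝ)) ^ ((n:ℝ)⁻¹) := by
                rw [← Real.rpow_mul (div_nonneg (hρKpos ξ).le (hρLpos ξ).le),
                  mul_inv_cancel₀ hn'.ne', Real.rpow_one]
            _ = (C / B) ^ ((n:ℝ)⁻¹) := by rw [h5]
        rw [div_eq_iff (hρLpos ξ).ne'] at h6
        exact h6
      · exfalso
        rw [havg1, havg2, h4] at hlt
        exact lt_irrefl _ hlt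
    · -- proportional implies equality
      rintro ⟨c, hc, hKL⟩
      rw [hRHS]
      have hCeq : C = c ^ (n:ℝ) * B := by
        rw [hCdef, hBdef, ← integral_const_mul]
        exact integral_congr_ae (Filter.Eventually.of_forall fun ξ => by
          show ρK ξ ^ (n:ℝ) = c ^ (n:ℝ) * ρL ξ ^ (n:ℝ)
          rw [hKL ξ, Real.mul_rpow hc.le (hρLpos ξ).le])
      have hAeq : A = c ^ ((n:ℝ) - α) * B := by
        rw [hAdef, hBdef, ← integral_const_mul]
        exact integral_congr_ae (Filter.Eventually.of_forall fun ξ => by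
          show ρK ξ ^ ((n:ℝ) - α) * ρL ξ ^ α = c ^ ((n:ℝ) - α) * ρL ξ ^ (n:ℝ)
          rw [hKL ξ, Real.mul_rpow hc.le (hρLpos ξ).le, mul_assoc,
            ← Real.rpow_add (hρLpos ξ), sub_add_cancel])
      rw [hCeq, hAeq]
      have hnp : (n:ℝ) * p = (n:ℝ) - α := by rw [hpdef]; field_simp
      congr 1
      rw [mul_div_assoc, div_self hB.ne', mul_one, ← Real.rpow_mul hc.le, hnp]
end
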